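/- arXiv:2412.10812 — 6 statements merged into one kernel-verified Lean document; each statement's English description precedes it below -/
import Mathlib

section
/- Assume in addition 0 < s < 1 and that either μ > 0 or q < 1. Then ψ_μ is differentiable at every point of ℝ, its derivative at 0 equals 0, and for every θ ≠ 0 its derivative at θ equals 1/(μ·s·|ψ_μ(θ)|^(s−1) + q·|ψ_μ(θ)|^(q−1)). -/
/-!
The function `g s q μ` is strictly increasing, so its right inverse `ψ` is monotone and
surjective, hence continuous. Away from `0`, `g s q μ` has the positive derivative
`μ s |ζ|^(s-1) + q |ζ|^(q-1)`, and the inverse function theorem gives the formula for `ψ'`.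
At `0`, the identity `|g s q μ ζ| = μ |ζ|^s + |ζ|^q` yields `|ψ θ| ≤ M |ψ θ|^c |θ|` with
`c = 1 - s > 0` when `μ > 0` and `c = 1 - q > 0` when `q < 1`; since `ψ θ → 0`, this makes
`ψ θ = o(θ)`.
-/

open Real

noncomputable def g (s q μ ζ : ℝ) : ℝ := μ * |ζ| ^ (s - 1) * ζ + |ζ| ^ (q - 1) * ζ

open Filter Topology Asymptotics

lemma rpow_sub_one_mul_self {x p : ℝ} (hx : 0 ≤ x) (hp : p ≠ 0) :
    x ^ (p - 1) * x = x ^ p := by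
  calc x ^ (p - 1) * x = x ^ (p - 1) * x ^ (1 : ℝ) := by rw [rpow_one]
    _ = x ^ p := by rw [← rpow_add' hx (by simpa using hp), sub_add_cancel]

noncomputable def oddPow (p ζ : ℝ) : ℝ := |ζ| ^ (p - 1) * ζ

section OddPow

variable {p ζ : ℝ}

lemma oddPow_neg (p ζ : ℝ) : oddPow p (-ζ) = -oddPow p ζ := by
  simp [oddPow]

lemma oddPow_of_nonneg (hp : p ≠ 0) (hζ : 0 ≤ ζ) : oddPow p ζ = ζ ^ p := by
  rw [oddPow, abs_of_nonneg hζ, rpow_sub_one_mul_self hζ hp]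

lemma oddPow_strictMono (hp : 0 < p) : StrictMono (oddPow p) := by
  refine strictMono_of_odd_strictMonoOn_nonneg (oddPow_neg p) ?_
  refine (strictMonoOn_rpow_Ici_of_exponent_pos hp).congr fun ζ hζ => ?_
  exact (oddPow_of_nonneg hp.ne' hζ).symm

lemma hasDerivAt_oddPow_of_pos (hζ : 0 < ζ) : HasDerivAt (oddPow p) (p * ζ ^ (p - 1)) ζ := by
  refine (hasDerivAt_rpow_const (Or.inl hζ.ne')).congr_of_eventuallyEq ?_
  filter_upwards [eventually_gt_nhds hζ] with x hx
  rw [oddPow, abs_of_pos hx, ← rpow_add_one hx.ne', sub_add_cancel]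

lemma hasDerivAt_oddPow (hζ : ζ ≠ 0) : HasDerivAt (oddPow p) (p * |ζ| ^ (p - 1)) ζ := by
  rcases hζ.lt_or_gt with hneg | hpos
  · have h := ((hasDerivAt_oddPow_of_pos (p := p) (neg_pos.2 hneg)).comp ζ
      (hasDerivAt_neg ζ)).neg
    have hodd : -oddPow p ∘ Neg.neg = oddPow p := by
      funext x
      simp [oddPow_neg]
    rw [hodd] at h
    simpa [abs_of_neg hneg] using h
  · simpa [abs_of_pos hpos] using hasDerivAt_oddPow_of_pos (p := p) hpos

end OddPow

section G

variable {s q μ : ℝ}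

lemma g_eq_oddPow (s q μ : ℝ) : g s q μ = fun ζ => μ * oddPow s ζ + oddPow q ζ := by
  funext ζ
  simp only [g, oddPow]
  ring

lemma g_strictMono (hs : 0 < s) (hq : 0 < q) (hμ : 0 ≤ μ) : StrictMono (g s q μ) := by
  rw [g_eq_oddPow]
  exact ((oddPow_strictMono hs).monotone.const_mul hμ).add_strictMono (oddPow_strictMono hq)

lemma hasDerivAt_g {ζ : ℝ} (hζ : ζ ≠ 0) :
    HasDerivAt (g s q μ) (μ * s * |ζ| ^ (s - 1) + q * |ζ| ^ (q - 1)) ζ := by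
  rw [g_eq_oddPow, mul_assoc]
  exact ((hasDerivAt_oddPow hζ).const_mul μ).add (hasDerivAt_oddPow hζ)

lemma abs_g (hs : s ≠ 0) (hq : q ≠ 0) (hμ : 0 ≤ μ) (ζ : ℝ) :
    |g s q μ ζ| = μ * |ζ| ^ s + |ζ| ^ q := by
  have hfac : 0 ≤ μ * |ζ| ^ (s - 1) + |ζ| ^ (q - 1) := by positivity
  rw [show g s q μ ζ = (μ * |ζ| ^ (s - 1) + |ζ| ^ (q - 1)) * ζ by simp only [g]; ring,
    abs_mul, abs_of_nonneg hfac, add_mul, mul_assoc, rpow_sub_one_mul_self (abs_nonneg ζ) hs,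
    rpow_sub_one_mul_self (abs_nonneg ζ) hq]

end G

lemma exists_abs_le_mul_rpow_mul_abs_g {s q μ : ℝ} (hs : 0 < s) (hs1 : s < 1) (hq : 0 < q)
    (hμ : 0 ≤ μ) (hcase : 0 < μ ∨ q < 1) :
    ∃ c M : ℝ, 0 < c ∧ ∀ ζ, |ζ| ≤ M * |ζ| ^ c * |g s q μ ζ| := by
  have hsplit : ∀ (p : ℝ) (ζ : ℝ), |ζ| = |ζ| ^ (1 - p) * |ζ| ^ p := fun p ζ => by
    rw [← rpow_add' (abs_nonneg ζ) (by norm_num), sub_add_cancel, rpow_one]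
  rcases hcase with hμpos | hq1
  · refine ⟨1 - s, μ⁻¹, by linarith, fun ζ => ?_⟩
    rw [abs_g hs.ne' hq.ne' hμ]
    calc |ζ| = |ζ| ^ (1 - s) * |ζ| ^ s := hsplit s ζ
      _ = μ⁻¹ * |ζ| ^ (1 - s) * (μ * |ζ| ^ s) := by field_simp
      _ ≤ μ⁻¹ * |ζ| ^ (1 - s) * (μ * |ζ| ^ s + |ζ| ^ q) := by
          gcongr; exact le_add_of_nonneg_right (by positivity)
  · refine ⟨1 - q, 1, by linarith, fun ζ => ?_⟩
    rw [abs_g hs.ne' hq.ne' hμ, one_mul]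
    calc |ζ| = |ζ| ^ (1 - q) * |ζ| ^ q := hsplit q ζ
      _ ≤ |ζ| ^ (1 - q) * (μ * |ζ| ^ s + |ζ| ^ q) := by
          gcongr; exact le_add_of_nonneg_left (by positivity)

lemma continuous_of_strictMono_of_rightInverse {α β : Type*}
    [LinearOrder α] [TopologicalSpace α] [OrderTopology α] [DenselyOrdered α]
    [LinearOrder β] [TopologicalSpace β] [OrderTopology β]
    {f : α → β} {ψ : β → α} (hf : StrictMono f) (hψ : Function.RightInverse ψ f) :
    Continuous ψ := by
  have hmono : Monotone ψ := fun a b hab => hf.le_iff_le.1 (by rwa [hψ a, hψ b])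
  exact hmono.continuous_of_surjective fun ζ => ⟨f ζ, hf.injective (hψ (f ζ))⟩

lemma hasDerivAt_zero_of_abs_le_mul_rpow {f : ℝ → ℝ} {c M : ℝ} (hc : 0 < c)
    (hf : ContinuousAt f 0) (hf0 : f 0 = 0) (hle : ∀ x, |f x| ≤ M * |f x| ^ c * |x|) :
    HasDerivAt f 0 0 := by
  rw [hasDerivAt_iff_isLittleO_nhds_zero]
  simp only [zero_add, hf0, sub_zero, smul_zero]
  have htend : Tendsto (fun x => |f x| ^ c) (𝓝 0) (𝓝 0) := by
    simpa [hf0, zero_rpow hc.ne'] using (hf.abs.rpow_const (Or.inr hc.le)).tendsto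
  have hsmall : (fun x => |f x| ^ c * x) =o[𝓝 0] fun x => x := by
    simpa using (isLittleO_one_iff ℝ |>.2 htend).mul_isBigO (isBigO_refl (fun x : ℝ => x) _)
  refine IsBigO.trans_isLittleO (IsBigO.of_bound M (Eventually.of_forall fun x => ?_)) hsmall
  simpa [abs_mul, abs_of_nonneg (rpow_nonneg (abs_nonneg (f x)) c), mul_assoc] using hle x

theorem stmt_2_general (s q : ℝ) (hs : 0 < s) (hs1 : s < 1) (hsq : s < q)
    (μ : ℝ) (hμ : 0 ≤ μ) (hcase : 0 < μ ∨ q < 1)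
    (ψ : ℝ → ℝ)
    (hψ_right : ∀ θ : ℝ, g s q μ (ψ θ) = θ) :
    Differentiable ℝ ψ ∧
    deriv ψ 0 = 0 ∧
    (∀ θ : ℝ, θ ≠ 0 →
      deriv ψ θ = 1 / (μ * s * |ψ θ| ^ (s - 1) + q * |ψ θ| ^ (q - 1))) := by
  have hq : 0 < q := hs.trans hsq
  have hg0 : g s q μ 0 = 0 := by simp [g]
  have hgs := g_strictMono hs hq hμ
  have hψcont : Continuous ψ := continuous_of_strictMono_of_rightInverse hgs hψ_right
  have hψ0 : ψ 0 = 0 := hgs.injective (by rw [hψ_right, hg0])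
  have hD : ∀ θ, θ ≠ 0 →
      HasDerivAt ψ (μ * s * |ψ θ| ^ (s - 1) + q * |ψ θ| ^ (q - 1))⁻¹ θ := fun θ hθ => by
    have hne : ψ θ ≠ 0 := fun h => hθ (by rw [← hψ_right θ, h, hg0])
    have hpos : 0 < μ * s * |ψ θ| ^ (s - 1) + q * |ψ θ| ^ (q - 1) := by
      have := abs_pos.2 hne
      positivity
    exact (hasDerivAt_g hne).of_local_left_inverse hψcont.continuousAt hpos.ne'
      (Eventually.of_forall hψ_right)
  obtain ⟨c, M, hc, hbound⟩ := exists_abs_le_mul_rpow_mul_abs_g hs hs1 hq hμ hcase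
  have h0 : HasDerivAt ψ 0 0 :=
    hasDerivAt_zero_of_abs_le_mul_rpow hc hψcont.continuousAt hψ0
      fun θ => by simpa [hψ_right] using hbound (ψ θ)
  refine ⟨fun θ => ?_, h0.deriv, fun θ hθ => by rw [(hD θ hθ).deriv, one_div]⟩
  rcases eq_or_ne θ 0 with rfl | hθ
  · exact h0.differentiableAt
  · exact (hD θ hθ).differentiableAt

theorem stmt_2 (s q : ℝ) (hs : 0 < s) (hs1 : s < 1) (hsq : s < q)
    (μ : ℝ) (hμ : 0 ≤ μ) (hcase : 0 < μ ∨ q < 1)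
    (ψ : ℝ → ℝ)
    (hψ_right : ∀ θ : ℝ, g s q μ (ψ θ) = θ)
    (hψ_left : ∀ ζ : ℝ, ψ (g s q μ ζ) = ζ) :
    Differentiable ℝ ψ ∧
    deriv ψ 0 = 0 ∧
    (∀ θ : ℝ, θ ≠ 0 →
      deriv ψ θ = 1 / (μ * s * |ψ θ| ^ (s - 1) + q * |ψ θ| ^ (q - 1))) :=
  stmt_2_general s q hs hs1 hsq μ hμ hcase ψ hψ_right
end

section
/- For every real μ > 0, the quotient ψ_μ(θ)/(|θ|^(1/s − 1)·θ) tends to μ^(−1/s) as θ → 0 with θ ≠ 0. -/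
open Real Filter Topology

/-
Writing `θ = g(ζ) = a(ζ) |ζ|^(s-1) ζ` with `a(ζ) = μ + |ζ|^(q-s)`, the quotient
`ζ / (|θ|^(1/s-1) θ)` equals `a(ζ)^(-1/s)` exactly. Since `μ |ψ θ|^s ≤ |θ|`,
`ψ θ → 0` as `θ → 0`, so `a(ψ θ) → μ` and the quotient tends to `μ^(-1/s)`.
-/

lemma g_eq_of_ne_zero (s q μ : ℝ) {ζ : ℝ} (hζ : ζ ≠ 0) :
    g s q μ ζ = (μ + |ζ| ^ (q - s)) * |ζ| ^ (s - 1) * ζ := by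
  have h : |ζ| ^ (q - 1) = |ζ| ^ (q - s) * |ζ| ^ (s - 1) := by
    rw [← rpow_add (abs_pos.2 hζ)]; ring_nf
  rw [g, h]; ring

lemma abs_mul_rpow_sub_one_mul_self {a : ℝ} (s : ℝ) (ha : 0 ≤ a) {ζ : ℝ} (hζ : ζ ≠ 0) :
    |a * |ζ| ^ (s - 1) * ζ| = a * |ζ| ^ s := by
  have hr : 0 < |ζ| := abs_pos.2 hζ
  rw [abs_mul, abs_mul, abs_of_nonneg ha, abs_of_pos (rpow_pos_of_pos hr _), mul_assoc,
    ← rpow_add_one hr.ne', sub_add_cancel]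

lemma div_abs_rpow_mul_self_eq {a s ζ : ℝ} (ha : 0 < a) (hs : s ≠ 0) (hζ : ζ ≠ 0) :
    ζ / (|a * |ζ| ^ (s - 1) * ζ| ^ (1 / s - 1) * (a * |ζ| ^ (s - 1) * ζ)) =
      a ^ (-(1 / s)) := by
  have hr : 0 < |ζ| := abs_pos.2 hζ
  have hexp : s * (1 / s - 1) = 1 - s := by field_simp
  have hden : |a * |ζ| ^ (s - 1) * ζ| ^ (1 / s - 1) * (a * |ζ| ^ (s - 1) * ζ)
      = a ^ (1 / s) * ζ := by
    rw [abs_mul_rpow_sub_one_mul_self s ha.le hζ, mul_rpow ha.le (rpow_nonneg hr.le _),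
      ← rpow_mul hr.le, hexp]
    calc a ^ (1 / s - 1) * |ζ| ^ (1 - s) * (a * |ζ| ^ (s - 1) * ζ)
        = (a ^ (1 / s - 1) * a) * (|ζ| ^ (1 - s) * |ζ| ^ (s - 1)) * ζ := by ring
      _ = a ^ (1 / s) * ζ := by
        rw [← rpow_add_one ha.ne', ← rpow_add hr]; norm_num
  rw [hden, div_mul_cancel_right₀ hζ, rpow_neg ha.le]

lemma div_abs_g_rpow_mul_g_eq {s q μ ζ : ℝ} (hs : s ≠ 0) (hμ : 0 < μ) (hζ : ζ ≠ 0) :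
    ζ / (|g s q μ ζ| ^ (1 / s - 1) * g s q μ ζ) = (μ + |ζ| ^ (q - s)) ^ (-(1 / s)) := by
  rw [g_eq_of_ne_zero s q μ hζ]
  exact div_abs_rpow_mul_self_eq (add_pos_of_pos_of_nonneg hμ (rpow_nonneg (abs_nonneg _) _))
    hs hζ

lemma mul_abs_rpow_le_abs_g {s μ : ℝ} (q : ℝ) (hs : 0 < s) (hμ : 0 ≤ μ) (ζ : ℝ) :
    μ * |ζ| ^ s ≤ |g s q μ ζ| := by
  rcases eq_or_ne ζ 0 with rfl | hζ
  · simp [g, zero_rpow hs.ne']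
  · rw [g_eq_of_ne_zero s q μ hζ,
      abs_mul_rpow_sub_one_mul_self s (add_nonneg hμ (rpow_nonneg (abs_nonneg _) _)) hζ]
    gcongr
    exact le_add_of_nonneg_right (rpow_nonneg (abs_nonneg _) _)

lemma tendsto_nhdsNE_of_g_comp_eq {s q μ : ℝ} (hs : 0 < s) (hμ : 0 < μ) {ψ : ℝ → ℝ}
    (hψ : ∀ θ, g s q μ (ψ θ) = θ) : Tendsto ψ (𝓝[≠] 0) (𝓝[≠] 0) := by
  have hbound : ∀ θ, |ψ θ| ≤ (|θ| / μ) ^ s⁻¹ := by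
    intro θ
    have h := mul_abs_rpow_le_abs_g q hs hμ.le (ψ θ)
    rw [hψ θ] at h
    rwa [le_rpow_inv_iff_of_pos (abs_nonneg _) (by positivity) hs, le_div_iff₀' hμ]
  have hcont : Tendsto (fun θ : ℝ => (|θ| / μ) ^ s⁻¹) (𝓝 0) (𝓝 0) := by
    have h : ContinuousAt (fun θ : ℝ => (|θ| / μ) ^ s⁻¹) 0 :=
      (continuous_abs.continuousAt.div_const μ).rpow_const (Or.inr (inv_pos.2 hs).le)
    simpa [zero_rpow (inv_ne_zero hs.ne')] using h.tendsto
  refine tendsto_nhdsWithin_of_tendsto_nhds_of_eventually_within _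
    (squeeze_zero_norm hbound (hcont.mono_left nhdsWithin_le_nhds)) ?_
  filter_upwards [self_mem_nhdsWithin] with θ hθ hψθ
  exact hθ (by rw [← hψ θ, hψθ]; simp [g])

theorem stmt_4_general (s q : ℝ) (hs : 0 < s) (hsq : s < q) (μ : ℝ) (hμ : 0 < μ)
    (ψ : ℝ → ℝ)
    (hψ_right : ∀ θ : ℝ, g s q μ (ψ θ) = θ) :
    Tendsto (fun θ : ℝ => ψ θ / (|θ| ^ (1 / s - 1) * θ))
      (nhdsWithin 0 {(0 : ℝ)}ᶜ) (nhds (μ ^ (-(1 / s)))) := by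
  have hqs : q - s ≠ 0 := (sub_pos.2 hsq).ne'
  have hcont : ContinuousAt (fun ζ : ℝ => (μ + |ζ| ^ (q - s)) ^ (-(1 / s))) 0 :=
    (continuousAt_const.add (continuous_abs.continuousAt.rpow_const (Or.inr (sub_pos.2 hsq).le))
      ).rpow_const (Or.inl (by simp [zero_rpow hqs, hμ.ne']))
  have hlim : Tendsto (fun ζ : ℝ => (μ + |ζ| ^ (q - s)) ^ (-(1 / s))) (𝓝[≠] 0)
      (𝓝 (μ ^ (-(1 / s)))) := by
    simpa [zero_rpow hqs] using hcont.tendsto.mono_left nhdsWithin_le_nhds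
  have hψ := tendsto_nhdsNE_of_g_comp_eq hs hμ hψ_right
  refine (hlim.comp hψ).congr' ?_
  filter_upwards [hψ self_mem_nhdsWithin] with θ hψθ
  have h := div_abs_g_rpow_mul_g_eq (q := q) hs.ne' hμ hψθ
  rw [hψ_right] at h
  exact h.symm

theorem stmt_4 (s q : ℝ) (hs : 0 < s) (hsq : s < q) (μ : ℝ) (hμ : 0 < μ)
    (ψ : ℝ → ℝ)
    (hψ_right : ∀ θ : ℝ, g s q μ (ψ θ) = θ)
    (hψ_left : ∀ ζ : ℝ, ψ (g s q μ ζ) = ζ) :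
    Tendsto (fun θ : ℝ => ψ θ / (|θ| ^ (1 / s - 1) * θ))
      (nhdsWithin 0 {(0 : ℝ)}ᶜ) (nhds (μ ^ (-(1 / s)))) :=
  stmt_4_general s q hs hsq μ hμ ψ hψ_right
end

section
/- For every fixed θ ≠ 0, the map μ ↦ ψ_μ(θ) is differentiable on (0, ∞), and for every μ > 0 its derivative equals −|ψ_μ(θ)|^(s−1)·ψ_μ(θ)/(μ·s·|ψ_μ(θ)|^(s−1) + q·|ψ_μ(θ)|^(q−1)). -/
open Real

lemma aux_pos (s q : ℝ) (hs : 0 < s) (hsq : s < q)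
    (ψ : ℝ → ℝ → ℝ)
    (hψ_right : ∀ μ : ℝ, 0 ≤ μ → ∀ θ : ℝ, g s q μ (ψ μ θ) = θ)
    (θ : ℝ) (hθ : 0 < θ) (μ : ℝ) (hμ : 0 < μ) :
    HasDerivAt (fun m : ℝ => ψ m θ)
      (-(|ψ μ θ| ^ (s - 1) * ψ μ θ) /
        (μ * s * |ψ μ θ| ^ (s - 1) + q * |ψ μ θ| ^ (q - 1))) μ := by
  have hq : 0 < q := hs.trans hsq
  -- positivity of ψ m θ for m ≥ 0
  have hpos : ∀ m : ℝ, 0 ≤ m → 0 < ψ m θ := by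
    intro m hm
    by_contra h
    push_neg at h
    have := hψ_right m hm θ
    unfold g at this
    nlinarith [Real.rpow_nonneg (abs_nonneg (ψ m θ)) (s - 1),
      Real.rpow_nonneg (abs_nonneg (ψ m θ)) (q - 1),
      mul_nonneg hm (Real.rpow_nonneg (abs_nonneg (ψ m θ)) (s - 1))]
  -- the key algebraic identity for m ≥ 0
  have hkey : ∀ m : ℝ, 0 ≤ m → m * (ψ m θ) ^ s + (ψ m θ) ^ q = θ := by
    intro m hm
    have hz := hpos m hm
    have := hψ_right m hm θ
    unfold g at this
    rw [abs_of_pos hz] at this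
    have hzne := hz.ne'
    have hsplit : (ψ m θ) ^ s = (ψ m θ) ^ (s - 1) * ψ m θ := by
      rw [← Real.rpow_add_one hzne (s - 1)]; ring_nf
    have hsplit' : (ψ m θ) ^ q = (ψ m θ) ^ (q - 1) * ψ m θ := by
      rw [← Real.rpow_add_one hzne (q - 1)]; ring_nf
    rw [hsplit, hsplit']
    linarith [this]
  -- the inverse map Φ
  set Φ : ℝ → ℝ := fun ζ => (θ - ζ ^ q) / ζ ^ s with hΦdef
  have hΦψ : ∀ m : ℝ, 0 ≤ m → Φ (ψ m θ) = m := by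
    intro m hm
    have hz := hpos m hm
    have hk := hkey m hm
    have hzs : (0:ℝ) < (ψ m θ) ^ s := Real.rpow_pos_of_pos hz s
    simp only [hΦdef]
    rw [div_eq_iff hzs.ne']
    linarith
  -- Φ is strictly antitone on (0, ∞)
  have hanti : StrictAntiOn Φ (Set.Ioi 0) := by
    intro x hx y hy hxy
    simp only [Set.mem_Ioi] at hx hy
    have hxs : (0:ℝ) < x ^ s := Real.rpow_pos_of_pos hx s
    have hys : (0:ℝ) < y ^ s := Real.rpow_pos_of_pos hy s
    have h1 : x ^ s < y ^ s := Real.rpow_lt_rpow hx.le hxy hs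
    have h2 : x ^ (q - s) < y ^ (q - s) :=
      Real.rpow_lt_rpow hx.le hxy (by linarith)
    have hxq : x ^ q = x ^ s * x ^ (q - s) := by
      rw [← Real.rpow_add hx]; ring_nf
    have hyq : y ^ q = y ^ s * y ^ (q - s) := by
      rw [← Real.rpow_add hy]; ring_nf
    have hqs : (0:ℝ) < x ^ (q - s) := Real.rpow_pos_of_pos hx (q - s)
    show (θ - y ^ q) / y ^ s < (θ - x ^ q) / x ^ s
    rw [div_lt_div_iff₀ hys hxs, hxq, hyq]
    nlinarith [mul_pos hθ (sub_pos.mpr h1),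
      mul_pos (mul_pos hxs hys) (sub_pos.mpr h2)]
  set ζ₀ := ψ μ θ with hζ₀def
  have hζ₀ : 0 < ζ₀ := hpos μ hμ.le
  have hζ₀ne : ζ₀ ≠ 0 := hζ₀.ne'
  have hA : (0:ℝ) < ζ₀ ^ (s - 1) := Real.rpow_pos_of_pos hζ₀ (s - 1)
  have hB : (0:ℝ) < ζ₀ ^ (q - 1) := Real.rpow_pos_of_pos hζ₀ (q - 1)
  have hC : (0:ℝ) < ζ₀ ^ s := Real.rpow_pos_of_pos hζ₀ s
  have hCs : ζ₀ ^ s = ζ₀ ^ (s - 1) * ζ₀ := by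
    rw [← Real.rpow_add_one hζ₀ne (s - 1)]; ring_nf
  have hDq : ζ₀ ^ q = ζ₀ ^ (q - 1) * ζ₀ := by
    rw [← Real.rpow_add_one hζ₀ne (q - 1)]; ring_nf
  have hθeq : θ - ζ₀ ^ q = μ * ζ₀ ^ s := by
    have := hkey μ hμ.le; linarith
  -- continuity of m ↦ ψ m θ at μ
  have hcont : ContinuousAt (fun m : ℝ => ψ m θ) μ := by
    rw [Metric.continuousAt_iff]
    intro ε hε
    set ε' := min ε (ζ₀ / 2) with hε'def
    have hε' : 0 < ε' := lt_min hε (by linarith)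
    have hlo : 0 < ζ₀ - ε' := by
      have : ε' ≤ ζ₀ / 2 := min_le_right _ _
      linarith
    have hmem1 : ζ₀ - ε' ∈ Set.Ioi (0:ℝ) := hlo
    have hmem0 : ζ₀ ∈ Set.Ioi (0:ℝ) := hζ₀
    have hmem2 : ζ₀ + ε' ∈ Set.Ioi (0:ℝ) := by simp; linarith
    have hΦμ : Φ ζ₀ = μ := hΦψ μ hμ.le
    have hμ1 : Φ (ζ₀ + ε') < μ := by
      rw [← hΦμ]; exact hanti hmem0 hmem2 (by linarith)
    have hμ2 : μ < Φ (ζ₀ - ε') := by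
      rw [← hΦμ]; exact hanti hmem1 hmem0 (by linarith)
    refine ⟨min (min (μ - Φ (ζ₀ + ε')) (Φ (ζ₀ - ε') - μ)) μ,
      lt_min (lt_min (by linarith) (by linarith)) hμ, ?_⟩
    intro x hx
    rw [Real.dist_eq] at hx ⊢
    have hx1 : |x - μ| < μ - Φ (ζ₀ + ε') :=
      hx.trans_le ((min_le_left _ _).trans (min_le_left _ _))
    have hx2 : |x - μ| < Φ (ζ₀ - ε') - μ :=
      hx.trans_le ((min_le_left _ _).trans (min_le_right _ _))
    have hx3 : |x - μ| < μ := hx.trans_le (min_le_right _ _)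
    rw [abs_lt] at hx1 hx2 hx3
    have hxpos : 0 < x := by linarith
    have hzx : 0 < ψ x θ := hpos x hxpos.le
    have hΦx : Φ (ψ x θ) = x := hΦψ x hxpos.le
    have hub : ψ x θ < ζ₀ + ε' := by
      by_contra h
      push_neg at h
      have : Φ (ψ x θ) ≤ Φ (ζ₀ + ε') :=
        hanti.antitoneOn hmem2 (by simp; linarith) h
      rw [hΦx] at this; linarith
    have hlb : ζ₀ - ε' < ψ x θ := by
      by_contra h
      push_neg at h
      have : Φ (ζ₀ - ε') ≤ Φ (ψ x θ) :=
        hanti.antitoneOn (by simpa using hzx) hmem1 h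
      rw [hΦx] at this; linarith
    have : |ψ x θ - ζ₀| < ε' := abs_lt.mpr ⟨by linarith, by linarith⟩
    exact this.trans_le (min_le_left _ _)
  -- derivative of Φ at ζ₀
  have htop : HasDerivAt (fun ζ : ℝ => θ - ζ ^ q) (0 - q * ζ₀ ^ (q - 1)) ζ₀ :=
    (hasDerivAt_const ζ₀ θ).sub (Real.hasDerivAt_rpow_const (Or.inl hζ₀ne))
  have hbot : HasDerivAt (fun ζ : ℝ => ζ ^ s) (s * ζ₀ ^ (s - 1)) ζ₀ :=
    Real.hasDerivAt_rpow_const (Or.inl hζ₀ne)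
  have hΦder : HasDerivAt Φ
      (((0 - q * ζ₀ ^ (q - 1)) * ζ₀ ^ s - (θ - ζ₀ ^ q) * (s * ζ₀ ^ (s - 1))) /
        (ζ₀ ^ s) ^ 2) ζ₀ := htop.div hbot hC.ne'
  set d := ((0 - q * ζ₀ ^ (q - 1)) * ζ₀ ^ s - (θ - ζ₀ ^ q) * (s * ζ₀ ^ (s - 1))) /
      (ζ₀ ^ s) ^ 2 with hd_def
  have hE : (0:ℝ) < μ * s * ζ₀ ^ (s - 1) + q * ζ₀ ^ (q - 1) := by positivity
  have hdval : d = -(μ * s * ζ₀ ^ (s - 1) + q * ζ₀ ^ (q - 1)) / ζ₀ ^ s := by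
    rw [hd_def, hθeq]
    field_simp
    ring
  have hdne : d ≠ 0 := by
    rw [hdval]
    exact div_ne_zero (neg_ne_zero.mpr hE.ne') hC.ne'
  have hev : ∀ᶠ y in nhds μ, Φ (ψ y θ) = y := by
    filter_upwards [Ioi_mem_nhds hμ] with y hy
    exact hΦψ y (le_of_lt hy)
  have hmain : HasDerivAt (fun m : ℝ => ψ m θ) d⁻¹ μ :=
    HasDerivAt.of_local_left_inverse hcont hΦder hdne hev
  have hval : -(|ζ₀| ^ (s - 1) * ζ₀) /
      (μ * s * |ζ₀| ^ (s - 1) + q * |ζ₀| ^ (q - 1)) = d⁻¹ := by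
    rw [abs_of_pos hζ₀, hdval, hCs, inv_div, div_neg, neg_div]
  rw [hζ₀def] at hval
  exact hval ▸ hmain

theorem stmt_5 (s q : ℝ) (hs : 0 < s) (hsq : s < q)
    (ψ : ℝ → ℝ → ℝ)
    (hψ_right : ∀ μ : ℝ, 0 ≤ μ → ∀ θ : ℝ, g s q μ (ψ μ θ) = θ)
    (hψ_left : ∀ μ : ℝ, 0 ≤ μ → ∀ ζ : ℝ, ψ μ (g s q μ ζ) = ζ)
    (θ : ℝ) (hθ : θ ≠ 0) :
    ∀ μ : ℝ, 0 < μ →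
      HasDerivAt (fun m : ℝ => ψ m θ)
        (-(|ψ μ θ| ^ (s - 1) * ψ μ θ) /
          (μ * s * |ψ μ θ| ^ (s - 1) + q * |ψ μ θ| ^ (q - 1))) μ := by
  intro μ hμ
  rcases hθ.lt_or_gt with hneg | hposθ
  · -- θ < 0 : use oddness
    have hodd : ∀ m : ℝ, 0 ≤ m → ψ m θ = -ψ m (-θ) := by
      intro m hm
      have hgodd : ∀ ζ : ℝ, g s q m (-ζ) = -(g s q m ζ) := by
        intro ζ; unfold g; rw [abs_neg]; ring
      have h1 : g s q m (-(ψ m (-θ))) = θ := by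
        rw [hgodd, hψ_right m hm (-θ)]; ring
      calc ψ m θ = ψ m (g s q m (-(ψ m (-θ)))) := by rw [h1]
        _ = -ψ m (-θ) := hψ_left m hm _
    have H := aux_pos s q hs hsq ψ hψ_right (-θ) (by linarith) μ hμ
    have H2 := H.neg
    have Hcongr : HasDerivAt (fun m : ℝ => ψ m θ)
        (-(-(|ψ μ (-θ)| ^ (s - 1) * ψ μ (-θ)) /
          (μ * s * |ψ μ (-θ)| ^ (s - 1) + q * |ψ μ (-θ)| ^ (q - 1)))) μ := by
      apply H2.congr_of_eventuallyEq
      filter_upwards [Ioi_mem_nhds hμ] with m hm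
      exact hodd m (le_of_lt hm)
    have heq : -(|ψ μ θ| ^ (s - 1) * ψ μ θ) /
          (μ * s * |ψ μ θ| ^ (s - 1) + q * |ψ μ θ| ^ (q - 1)) =
        -(-(|ψ μ (-θ)| ^ (s - 1) * ψ μ (-θ)) /
          (μ * s * |ψ μ (-θ)| ^ (s - 1) + q * |ψ μ (-θ)| ^ (q - 1))) := by
      rw [hodd μ hμ.le, abs_neg]
      ring
    exact heq ▸ Hcongr
  · exact aux_pos s q hs hsq ψ hψ_right θ hposθ μ hμ
end

section
/- Assume in addition q ≥ 1. Then there exists a constant C > 0 depending only on q such that for every μ ≥ 0 and all θ₁, θ₂ ∈ ℝ one has |ψ_μ(θ₁) − ψ_μ(θ₂)| ≤ C·|θ₁ − θ₂|^(1/q); in particular ψ_μ is (1/q)-Hölder continuous on ℝ. -/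
open Real

/-!
Write `g = μ · φ_s + φ_q` with the odd power `φ_p(t) = |t|^(p-1) t`. Since `φ_s` is monotone and
`μ ≥ 0`, for `b ≤ a` the increment `g(a) - g(b)` dominates `φ_q(a) - φ_q(b)`, which in turn
dominates `2^(1-q) (a - b)^q`: superadditivity of `t ↦ t^q` on `[0, ∞)` when `a, b` have the same
sign, and convexity, `(a + |b|)^q ≤ 2^(q-1) (a^q + |b|^q)`, when they do not. Applied to
`a = ψ(θ₁)`, `b = ψ(θ₂)` and taking `q`-th roots gives the bound with `C = 2`.
-/

noncomputable def signedRpow (p t : ℝ) : ℝ := |t| ^ (p - 1) * t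

namespace signedRpow

lemma eq_rpow_of_nonneg {p t : ℝ} (hp : p ≠ 0) (ht : 0 ≤ t) : signedRpow p t = t ^ p := by
  rcases ht.eq_or_lt with rfl | ht
  · simp [signedRpow, zero_rpow hp]
  · rw [signedRpow, abs_of_pos ht, ← rpow_add_one ht.ne', sub_add_cancel]

lemma apply_neg (p t : ℝ) : signedRpow p (-t) = -signedRpow p t := by
  simp [signedRpow]

lemma eq_neg_rpow_of_nonpos {p t : ℝ} (hp : p ≠ 0) (ht : t ≤ 0) :
    signedRpow p t = -(-t) ^ p := by
  rw [← eq_rpow_of_nonneg hp (neg_nonneg.2 ht), apply_neg, neg_neg]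

lemma monotone {p : ℝ} (hp : 0 < p) : Monotone (signedRpow p) := by
  intro a b hab
  rcases le_total 0 a with ha | ha
  · rw [eq_rpow_of_nonneg hp.ne' ha, eq_rpow_of_nonneg hp.ne' (ha.trans hab)]
    exact rpow_le_rpow ha hab hp.le
  rcases le_total 0 b with hb | hb
  · rw [eq_neg_rpow_of_nonpos hp.ne' ha, eq_rpow_of_nonneg hp.ne' hb]
    linarith [rpow_nonneg (neg_nonneg.2 ha) p, rpow_nonneg hb p]
  · rw [eq_neg_rpow_of_nonpos hp.ne' ha, eq_neg_rpow_of_nonpos hp.ne' hb, neg_le_neg_iff]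
    exact rpow_le_rpow (neg_nonneg.2 hb) (neg_le_neg hab) hp.le

lemma rpow_sub_le_sub_of_nonneg {q a b : ℝ} (hq : 1 ≤ q) (hb : 0 ≤ b) (hab : b ≤ a) :
    (a - b) ^ q ≤ signedRpow q a - signedRpow q b := by
  have hq0 : q ≠ 0 := by positivity
  rw [eq_rpow_of_nonneg hq0 (hb.trans hab), eq_rpow_of_nonneg hq0 hb]
  have := add_rpow_le_rpow_add (sub_nonneg.2 hab) hb hq
  rw [sub_add_cancel] at this
  linarith

lemma rpow_sub_le_two_rpow_mul_sub {q a b : ℝ} (hq : 1 ≤ q) (hab : b ≤ a) :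
    (a - b) ^ q ≤ 2 ^ (q - 1) * (signedRpow q a - signedRpow q b) := by
  have hq0 : q ≠ 0 := by positivity
  have h2 : (1 : ℝ) ≤ 2 ^ (q - 1) := one_le_rpow one_le_two (by linarith)
  have hsub := sub_nonneg.2 (monotone (by positivity) hab)
  rcases le_total 0 b with hb | hb
  · nlinarith [rpow_sub_le_sub_of_nonneg hq hb hab]
  rcases le_total 0 a with ha | ha
  · rw [eq_rpow_of_nonneg hq0 ha, eq_neg_rpow_of_nonpos hq0 hb, sub_neg_eq_add, sub_eq_add_neg]
    lift a to NNReal using ha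
    lift -b to NNReal using neg_nonneg.2 hb with c
    exact_mod_cast NNReal.rpow_add_le_mul_rpow_add_rpow a c hq
  · have := rpow_sub_le_sub_of_nonneg hq (neg_nonneg.2 ha) (neg_le_neg hab)
    rw [apply_neg, apply_neg, neg_sub_neg, neg_sub_neg] at this
    nlinarith

end signedRpow

lemma g_eq (s q μ ζ : ℝ) : g s q μ ζ = μ * signedRpow s ζ + signedRpow q ζ := by
  simp only [g, signedRpow]
  ring

lemma rpow_sub_le_two_rpow_mul_g_sub {s q μ a b : ℝ} (hs : 0 < s) (hq : 1 ≤ q) (hμ : 0 ≤ μ)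
    (hab : b ≤ a) : (a - b) ^ q ≤ 2 ^ (q - 1) * (g s q μ a - g s q μ b) := by
  have hlower : μ * signedRpow s b ≤ μ * signedRpow s a :=
    mul_le_mul_of_nonneg_left (signedRpow.monotone hs hab) hμ
  calc (a - b) ^ q ≤ 2 ^ (q - 1) * (signedRpow q a - signedRpow q b) :=
        signedRpow.rpow_sub_le_two_rpow_mul_sub hq hab
    _ ≤ 2 ^ (q - 1) * (g s q μ a - g s q μ b) := by
        rw [g_eq, g_eq]
        exact mul_le_mul_of_nonneg_left (by linarith) (by positivity)

lemma abs_rpow_sub_le_two_rpow_mul_abs_g_sub {s q μ : ℝ} (hs : 0 < s) (hq : 1 ≤ q)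
    (hμ : 0 ≤ μ) (a b : ℝ) : |a - b| ^ q ≤ 2 ^ (q - 1) * |g s q μ a - g s q μ b| := by
  rcases le_total b a with hab | hab
  · rw [abs_of_nonneg (sub_nonneg.2 hab)]
    exact (rpow_sub_le_two_rpow_mul_g_sub hs hq hμ hab).trans (by gcongr; exact le_abs_self _)
  · rw [abs_sub_comm, abs_of_nonneg (sub_nonneg.2 hab), abs_sub_comm]
    exact (rpow_sub_le_two_rpow_mul_g_sub hs hq hμ hab).trans (by gcongr; exact le_abs_self _)

lemma le_two_mul_rpow_one_div_of_rpow_le {q x y : ℝ} (hq : 1 ≤ q) (hx : 0 ≤ x) (hy : 0 ≤ y)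
    (h : x ^ q ≤ 2 ^ (q - 1) * y) : x ≤ 2 * y ^ (1 / q) := by
  have hq0 : 0 < q := by positivity
  rw [← rpow_le_rpow_iff hx (by positivity) hq0, mul_rpow zero_le_two (by positivity), one_div,
    rpow_inv_rpow hy hq0.ne']
  calc x ^ q ≤ 2 ^ (q - 1) * y := h
    _ ≤ 2 ^ q * y := by gcongr <;> linarith

theorem stmt_6_general (s q : ℝ) (hs : 0 < s) (hq : 1 ≤ q)
    (ψ : ℝ → ℝ → ℝ)
    (hψ_right : ∀ μ : ℝ, 0 ≤ μ → ∀ θ : ℝ, g s q μ (ψ μ θ) = θ) :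
    ∃ C : ℝ, 0 < C ∧ ∀ μ : ℝ, 0 ≤ μ → ∀ θ₁ θ₂ : ℝ,
      |ψ μ θ₁ - ψ μ θ₂| ≤ C * |θ₁ - θ₂| ^ (1 / q) := by
  refine ⟨2, two_pos, fun μ hμ θ₁ θ₂ => le_two_mul_rpow_one_div_of_rpow_le hq (abs_nonneg _)
    (abs_nonneg _) ?_⟩
  simpa only [hψ_right μ hμ] using abs_rpow_sub_le_two_rpow_mul_abs_g_sub hs hq hμ (ψ μ θ₁) (ψ μ θ₂)

theorem stmt_6 (s q : ℝ) (hs : 0 < s) (hsq : s < q) (hq : 1 ≤ q)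
    (ψ : ℝ → ℝ → ℝ)
    (hψ_right : ∀ μ : ℝ, 0 ≤ μ → ∀ θ : ℝ, g s q μ (ψ μ θ) = θ)
    (hψ_left : ∀ μ : ℝ, 0 ≤ μ → ∀ ζ : ℝ, ψ μ (g s q μ ζ) = ζ) :
    ∃ C : ℝ, 0 < C ∧ ∀ μ : ℝ, 0 ≤ μ → ∀ θ₁ θ₂ : ℝ,
      |ψ μ θ₁ - ψ μ θ₂| ≤ C * |θ₁ - θ₂| ^ (1 / q) :=
  stmt_6_general s q hs hq ψ hψ_right
end

section
/- For every real μ > 0, the quotient Ψ_μ(θ)/|θ|^((s+1)/s) tends to (s/(s+1))·μ^(−1/s) as θ → 0 with θ ≠ 0. -/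
open Real Filter

/-!
By L'Hôpital's rule, with `p = (s + 1) / s` the limit is that of `ψ θ / (p |θ| ^ (p - 2) θ)`.
Writing `θ = g ζ = |ζ| ^ (s - 1) (μ + |ζ| ^ (q - s)) ζ`, this quotient equals
`(s / (s + 1)) (μ + |ζ| ^ (q - s)) ^ (-1 / s)`, and `ζ = ψ θ → 0` because the inverse of the
strictly increasing bijection `g` is continuous.
-/

open Topology Function

theorem Function.LeftInverse.continuous_of_strictMono {α β : Type*} [LinearOrder α]
    [TopologicalSpace α] [OrderTopology α] [LinearOrder β] [TopologicalSpace β] [OrderTopology β]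
    [DenselyOrdered β] {f : β → α} {ψ : α → β} (hf : StrictMono f) (hψ : LeftInverse f ψ) :
    Continuous ψ :=
  Monotone.continuous_of_surjective (fun a b hab => hf.le_iff_le.mp (by rwa [hψ a, hψ b]))
    fun b => ⟨f b, hf.injective (hψ (f b))⟩

lemma abs_rpow_sub_one_mul_of_nonneg {p x : ℝ} (hp : 0 < p) (hx : 0 ≤ x) :
    |x| ^ (p - 1) * x = x ^ p := by
  rcases hx.eq_or_lt with rfl | hx
  · simp [zero_rpow hp.ne']
  · rw [abs_of_pos hx, rpow_sub_one hx.ne', div_mul_cancel₀ _ hx.ne']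

lemma strictMono_abs_rpow_sub_one_mul {p : ℝ} (hp : 0 < p) :
    StrictMono fun x : ℝ => |x| ^ (p - 1) * x := by
  refine strictMono_of_odd_strictMonoOn_nonneg (fun x => by simp only [abs_neg, mul_neg]) ?_
  intro a ha b hb hab
  simp only [abs_rpow_sub_one_mul_of_nonneg hp ha, abs_rpow_sub_one_mul_of_nonneg hp hb]
  exact rpow_lt_rpow ha hab hp

lemma strictMono_g {s q μ : ℝ} (hs : 0 < s) (hq : 0 < q) (hμ : 0 < μ) :
    StrictMono (g s q μ) := by
  have h := ((strictMono_abs_rpow_sub_one_mul hs).const_mul hμ).add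
    (strictMono_abs_rpow_sub_one_mul hq)
  exact fun a b hab => by simpa only [g, mul_assoc] using h hab

lemma g_zero (s q μ : ℝ) : g s q μ 0 = 0 := by simp [g]

lemma g_eq_mul {s q μ ζ : ℝ} (hζ : ζ ≠ 0) :
    g s q μ ζ = |ζ| ^ (s - 1) * (μ + |ζ| ^ (q - s)) * ζ := by
  rw [g, mul_add, ← rpow_add (abs_pos.mpr hζ)]
  ring_nf

lemma div_deriv_abs_g_rpow {s q μ ζ : ℝ} (hs : 0 < s) (hμ : 0 ≤ μ) (hζ : ζ ≠ 0) :
    ζ / ((s + 1) / s * |g s q μ ζ| ^ ((s + 1) / s - 2) * g s q μ ζ) =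
      s / (s + 1) * (μ + |ζ| ^ (q - s)) ^ (-(1 / s)) := by
  have hb : 0 < |ζ| := abs_pos.mpr hζ
  set D := μ + |ζ| ^ (q - s)
  have hD : 0 < D := by positivity
  have habs : |g s q μ ζ| = |ζ| ^ s * D := by
    rw [g_eq_mul hζ, abs_mul, abs_mul, abs_of_pos (by positivity), abs_of_pos hD,
      mul_right_comm, ← rpow_add_one hb.ne', sub_add_cancel]
  have hexp : (s + 1) / s - 2 = 1 / s - 1 := by field_simp; ring
  have hζpow : |ζ| ^ (s * (1 / s - 1)) * |ζ| ^ (s - 1) = 1 := by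
    rw [← rpow_add hb, mul_sub, mul_one_div_cancel hs.ne']; simp
  have hDpow : D ^ (1 / s - 1) * D = D ^ (1 / s) := by
    rw [← rpow_add_one hD.ne', sub_add_cancel]
  rw [habs, g_eq_mul hζ, hexp, mul_rpow (by positivity) hD.le, ← rpow_mul hb.le, rpow_neg hD.le]
  calc ζ / ((s + 1) / s * (|ζ| ^ (s * (1 / s - 1)) * D ^ (1 / s - 1)) * (|ζ| ^ (s - 1) * D * ζ))
      = ζ / ((s + 1) / s * (|ζ| ^ (s * (1 / s - 1)) * |ζ| ^ (s - 1)) *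
          (D ^ (1 / s - 1) * D) * ζ) := by ring_nf
    _ = s / (s + 1) * (D ^ (1 / s))⁻¹ := by
      rw [hζpow, hDpow]
      field_simp

lemma tendsto_div_deriv_abs_rpow {s q μ : ℝ} {ψ : ℝ → ℝ} (hs : 0 < s) (hsq : s < q) (hμ : 0 < μ)
    (hgψ : LeftInverse (g s q μ) ψ) (hψ : Tendsto ψ (𝓝[≠] 0) (𝓝 0)) :
    Tendsto (fun θ => ψ θ / ((s + 1) / s * |θ| ^ ((s + 1) / s - 2) * θ)) (𝓝[≠] 0)
      (𝓝 (s / (s + 1) * μ ^ (-(1 / s)))) := by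
  have hcont : Continuous fun ζ : ℝ => s / (s + 1) * (μ + |ζ| ^ (q - s)) ^ (-(1 / s)) :=
    ((continuous_const.add (continuous_abs.rpow_const fun _ => Or.inr (by linarith))).rpow_const
      fun _ => Or.inl (add_pos_of_pos_of_nonneg hμ (by positivity)).ne').const_mul _
  have hlim := hcont.tendsto 0
  rw [abs_zero, zero_rpow (sub_pos.mpr hsq).ne', add_zero] at hlim
  refine (hlim.comp hψ).congr' ?_
  filter_upwards [self_mem_nhdsWithin] with θ (hθ : θ ≠ 0)
  have hψθ : ψ θ ≠ 0 := fun h => hθ (by rw [← hgψ θ, h, g_zero])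
  simpa only [comp_apply, hgψ θ] using (div_deriv_abs_g_rpow (q := q) hs hμ.le hψθ).symm

theorem stmt_9_general (s q : ℝ) (hs : 0 < s) (hsq : s < q) (μ : ℝ) (hμ : 0 < μ)
    (ψ : ℝ → ℝ)
    (hψ_right : ∀ θ : ℝ, g s q μ (ψ θ) = θ)
    (Ψ : ℝ → ℝ)
    (hΨ : ∀ θ : ℝ, Ψ θ = ∫ t in (0 : ℝ)..θ, ψ t) :
    Tendsto (fun θ : ℝ => Ψ θ / |θ| ^ ((s + 1) / s))
      (nhdsWithin 0 {(0 : ℝ)}ᶜ) (nhds ((s / (s + 1)) * μ ^ (-(1 / s)))) := by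
  obtain rfl : Ψ = fun θ => ∫ t in (0 : ℝ)..θ, ψ t := funext hΨ
  have hg := strictMono_g hs (hs.trans hsq) hμ
  have hψ : Continuous ψ := LeftInverse.continuous_of_strictMono hg hψ_right
  have hψ0 : ψ 0 = 0 := hg.injective (by rw [hψ_right, g_zero])
  have hp : 1 < (s + 1) / s := by rw [lt_div_iff₀ hs]; linarith
  refine HasDerivAt.lhopital_zero_nhdsNE (f' := ψ)
    (.of_forall fun θ => (hψ.integral_hasStrictDerivAt 0 θ).hasDerivAt)
    (.of_forall fun θ => hasDerivAt_abs_rpow θ hp) ?_ ?_ ?_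
    (tendsto_div_deriv_abs_rpow hs hsq hμ hψ_right ?_)
  · filter_upwards [self_mem_nhdsWithin] with θ hθ
    exact mul_ne_zero (by positivity [abs_pos.mpr hθ]) hθ
  · simpa using (hψ.integral_hasStrictDerivAt 0 0).hasDerivAt.continuousAt.tendsto.mono_left
      nhdsWithin_le_nhds
  · simpa [zero_rpow (by positivity : (s + 1) / s ≠ 0)] using
      ((continuous_abs.rpow_const (p := (s + 1) / s) fun _ => Or.inr (by positivity)).tendsto
        0).mono_left nhdsWithin_le_nhds
  · simpa only [hψ0] using (hψ.tendsto 0).mono_left nhdsWithin_le_nhds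

theorem stmt_9 (s q : ℝ) (hs : 0 < s) (hsq : s < q) (μ : ℝ) (hμ : 0 < μ)
    (ψ : ℝ → ℝ)
    (hψ_right : ∀ θ : ℝ, g s q μ (ψ θ) = θ)
    (hψ_left : ∀ ζ : ℝ, ψ (g s q μ ζ) = ζ)
    (Ψ : ℝ → ℝ)
    (hΨ : ∀ θ : ℝ, Ψ θ = ∫ t in (0 : ℝ)..θ, ψ t) :
    Tendsto (fun θ : ℝ => Ψ θ / |θ| ^ ((s + 1) / s))
      (nhdsWithin 0 {(0 : ℝ)}ᶜ) (nhds ((s / (s + 1)) * μ ^ (-(1 / s)))) :=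
  stmt_9_general s q hs hsq μ hμ ψ hψ_right Ψ hΨ
end

section
/- Assume in addition 0 < s < 1 < q and let μ > 0. Set ζ_μ = [s(1−s)/(q(q−s))]^(1/(q−s))·μ^(1/(q−s)), C̃ = 1 + q(q−s)/(s(1−s)) and c̃ = 1 + s(1−s)/(q(q−s)). Then for every ζ ∈ ℝ one has |ζ|^(q+1) ≤ g_μ(ζ)·ζ; moreover g_μ(ζ)·ζ ≤ C̃·|ζ|^(q+1) whenever |ζ| ≥ ζ_μ, and g_μ(ζ)·ζ ≤ μ·c̃·|ζ|^(s+1) whenever |ζ| ≤ ζ_μ. -/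
/-! With `x = |ζ|`, one has `g_μ(ζ) ζ = μ x^(s+1) + x^(q+1)`, which gives the lower bound at
once. Since `x^(q+1) = x^(q-s) x^(s+1)`, the two upper bounds amount to comparing `x^(q-s)` with
`a μ`, where `a = s(1-s)/(q(q-s))`; the threshold `ζ_μ` is exactly `(a μ)^(1/(q-s))`. -/

open Real

lemma abs_rpow_sub_one_mul_self_mul_self {p : ℝ} (hp : p + 1 ≠ 0) (ζ : ℝ) :
    |ζ| ^ (p - 1) * ζ * ζ = |ζ| ^ (p + 1) := by
  rw [show p + 1 = (p - 1) + 2 by ring, rpow_add' (abs_nonneg ζ) fun h => hp (by linarith),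
    rpow_two, sq_abs, mul_assoc, sq]

lemma g_mul_self {s q : ℝ} (hs : s + 1 ≠ 0) (hq : q + 1 ≠ 0) (μ ζ : ℝ) :
    g s q μ ζ * ζ = μ * |ζ| ^ (s + 1) + |ζ| ^ (q + 1) := by
  rw [g, add_mul, mul_assoc μ, mul_assoc μ, abs_rpow_sub_one_mul_self_mul_self hs,
    abs_rpow_sub_one_mul_self_mul_self hq]

section

variable {s q a μ x : ℝ}

lemma rpow_add_one_eq_rpow_sub_mul (hq : q + 1 ≠ 0) (hx : 0 ≤ x) :
    x ^ (q + 1) = x ^ (q - s) * x ^ (s + 1) := by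
  rw [← rpow_add' hx fun h => hq (by linarith)]
  ring_nf

lemma add_rpow_le_of_le_rpow_sub (hq : q + 1 ≠ 0) (hx : 0 ≤ x) (ha : 0 < a)
    (h : a * μ ≤ x ^ (q - s)) :
    μ * x ^ (s + 1) + x ^ (q + 1) ≤ (1 + a⁻¹) * x ^ (q + 1) := by
  have hμ : μ ≤ a⁻¹ * x ^ (q - s) := by
    rwa [le_inv_mul_iff₀ ha]
  have := mul_le_mul_of_nonneg_right hμ (rpow_nonneg hx (s + 1))
  rw [rpow_add_one_eq_rpow_sub_mul (s := s) hq hx]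
  linarith

lemma add_rpow_le_of_rpow_sub_le (hq : q + 1 ≠ 0) (hx : 0 ≤ x) (h : x ^ (q - s) ≤ a * μ) :
    μ * x ^ (s + 1) + x ^ (q + 1) ≤ μ * (1 + a) * x ^ (s + 1) := by
  have := mul_le_mul_of_nonneg_right h (rpow_nonneg hx (s + 1))
  rw [rpow_add_one_eq_rpow_sub_mul (s := s) hq hx]
  linarith

end

theorem stmt_13 (s q : ℝ) (hs : 0 < s) (hs1 : s < 1) (hq : 1 < q)
    (μ : ℝ) (hμ : 0 < μ) :
    ∀ ζ : ℝ,
      |ζ| ^ (q + 1) ≤ g s q μ ζ * ζ ∧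
      ((s * (1 - s) / (q * (q - s))) ^ ((1 : ℝ) / (q - s)) * μ ^ ((1 : ℝ) / (q - s)) ≤ |ζ| →
        g s q μ ζ * ζ ≤ (1 + q * (q - s) / (s * (1 - s))) * |ζ| ^ (q + 1)) ∧
      (|ζ| ≤ (s * (1 - s) / (q * (q - s))) ^ ((1 : ℝ) / (q - s)) * μ ^ ((1 : ℝ) / (q - s)) →
        g s q μ ζ * ζ ≤ μ * (1 + s * (1 - s) / (q * (q - s))) * |ζ| ^ (s + 1)) := by
  intro ζ
  have hqs : 0 < q - s := by linarith
  have hq1 : q + 1 ≠ 0 := by linarith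
  set a := s * (1 - s) / (q * (q - s)) with ha_def
  have ha : 0 < a := div_pos (mul_pos hs (by linarith)) (mul_pos (by linarith) hqs)
  have hthreshold : a ^ (1 / (q - s)) * μ ^ (1 / (q - s)) = (a * μ) ^ (q - s)⁻¹ := by
    rw [mul_rpow ha.le hμ.le, one_div]
  have haμ : 0 ≤ a * μ := by positivity
  rw [hthreshold, ← inv_div, ← ha_def, g_mul_self (by linarith) hq1]
  refine ⟨le_add_of_nonneg_left (by positivity), fun h => ?_, fun h => ?_⟩
  · exact add_rpow_le_of_le_rpow_sub hq1 (abs_nonneg ζ) ha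
      ((rpow_inv_le_iff_of_pos haμ (abs_nonneg ζ) hqs).1 h)
  · exact add_rpow_le_of_rpow_sub_le hq1 (abs_nonneg ζ)
      ((le_rpow_inv_iff_of_pos (abs_nonneg ζ) haμ hqs).1 h)
end
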